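/- Semantic soundness of the Inner rule: for every program P and all pre, pst ⊆ S, R, G ⊆ S × S, if ⊨ P sat ⟨pre,R,G,pst⟩ holds for P as a program, then ⊨ Anony P sat ⟨pre,R,G,pst⟩ holds for the anonymous event Anony P. -/
import Mathlib


set_option autoImplicit false

namespace PiCore

/-! ## Syntax of PiCore -/

/-- PiCore programs; `term` is the terminated program `⊥`. -/
inductive Prog (S : Type) : Type where
  | term : Prog S
  | basic : (S → S) → Prog S
  | seq : Prog S → Prog S → Prog S
  | cond : Set S → Prog S → Prog S → Prog S
  | while' : Set S → Prog S → Prog S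
  | await : Set S → Prog S → Prog S
  | nondt : Set (S × S) → Prog S

/-! ## Small-step semantics of programs -/

mutual
/-- Small-step program semantics `(P, s) -c→ (P', s')`. -/
inductive PStep {S : Type} : Prog S × S → Prog S × S → Prop where
  | basic (f : S → S) (s : S) : PStep (.basic f, s) (.term, f s)
  | seq1 {P₁ : Prog S} {s s' : S} (P₂ : Prog S) :
      PStep (P₁, s) (.term, s') → PStep (.seq P₁ P₂, s) (P₂, s')
  | seq2 {P₁ P₁' : Prog S} {s s' : S} (P₂ : Prog S) :
      PStep (P₁, s) (P₁', s') → P₁' ≠ .term → PStep (.seq P₁ P₂, s) (.seq P₁' P₂, s')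
  | condT {b : Set S} {s : S} (P₁ P₂ : Prog S) : s ∈ b → PStep (.cond b P₁ P₂, s) (P₁, s)
  | condF {b : Set S} {s : S} (P₁ P₂ : Prog S) : s ∉ b → PStep (.cond b P₁ P₂, s) (P₂, s)
  | whileT {b : Set S} {s : S} (P : Prog S) : s ∈ b →
      PStep (.while' b P, s) (.seq P (.while' b P), s)
  | whileF {b : Set S} {s : S} (P : Prog S) : s ∉ b → PStep (.while' b P, s) (.term, s)
  | await {b : Set S} {s s' : S} {P : Prog S} : s ∈ b →
      PStepStar (P, s) (.term, s') → PStep (.await b P, s) (.term, s')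
  | nondt {r : Set (S × S)} {s s' : S} : (s, s') ∈ r → PStep (.nondt r, s) (.term, s')

/-- Reflexive transitive closure of `PStep`. -/
inductive PStepStar {S : Type} : Prog S × S → Prog S × S → Prop where
  | refl (c : Prog S × S) : PStepStar c c
  | step {c c' c'' : Prog S × S} : PStep c c' → PStepStar c' c'' → PStepStar c c''
end

/-! ## Events, event systems, parallel event systems -/

/-- A basic event: a label, a guard and a body. -/
structure EvtSpec (L S : Type) : Type where
  label : L
  guard : Set S
  body : Prog S

/-- Events: basic (non-triggered) events and anonymous (triggered) events. -/
inductive Event (L S : Type) : Type where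
  | basic : EvtSpec L S → Event L S
  | anony : Prog S → Event L S

/-- Event contexts. -/
abbrev EvtCtx (L S K : Type) := K → Event L S

/-- The action component of a transition label: a program action `c`
or the occurrence of an event. -/
inductive Act (L S : Type) : Type where
  | cmd : Act L S
  | evt : Event L S → Act L S

/-- Transition labels `t@κ`. -/
abbrev Lbl (L S K : Type) := Act L S × K

/-- Configurations at the level of events. -/
abbrev EConf (L S K : Type) := Event L S × S × EvtCtx L S K

/-- Labelled transitions of events. -/
inductive EStep {L S K : Type} [DecidableEq K] :
    EConf L S K → Lbl L S K → EConf L S K → Prop where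
  | anony {P P' : Prog S} {s s' : S} (x : EvtCtx L S K) (κ : K) :
      PStep (P, s) (P', s') → EStep (.anony P, s, x) (.cmd, κ) (.anony P', s', x)
  | basic (α : EvtSpec L S) {s : S} (x : EvtCtx L S K) (κ : K) : s ∈ α.guard →
      EStep (.basic α, s, x) (.evt (.basic α), κ)
        (.anony α.body, s, Function.update x κ (.basic α))

/-- Event systems: a finite event set `{ℰ₀, …, ℰₙ}` or a sequence `EvtSeq ℰ 𝒮`. -/
inductive EvtSys (L S : Type) : Type where
  | set : (n : ℕ) → (Fin (n + 1) → Event L S) → EvtSys L S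
  | seq : Event L S → EvtSys L S → EvtSys L S

/-- Configurations at the level of event systems. -/
abbrev ESConf (L S K : Type) := EvtSys L S × S × EvtCtx L S K

/-- Labelled transitions of event systems. -/
inductive ESStep {L S K : Type} [DecidableEq K] :
    ESConf L S K → Lbl L S K → ESConf L S K → Prop where
  | set {n : ℕ} {es : Fin (n + 1) → Event L S} (i : Fin (n + 1))
      {s s' : S} {x x' : EvtCtx L S K} {e' : Event L S} {κ : K} :
      EStep (es i, s, x) (.evt (es i), κ) (e', s', x') →
      ESStep (.set n es, s, x) (.evt (es i), κ) (.seq e' (.set n es), s', x')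
  | seq1 {e e' : Event L S} (𝒮 : EvtSys L S) {s s' : S} {x x' : EvtCtx L S K}
      {l : Lbl L S K} :
      EStep (e, s, x) l (e', s', x') → e' ≠ .anony .term →
      ESStep (.seq e 𝒮, s, x) l (.seq e' 𝒮, s', x')
  | seq2 {e : Event L S} (𝒮 : EvtSys L S) {s s' : S} {x x' : EvtCtx L S K}
      {l : Lbl L S K} :
      EStep (e, s, x) l (.anony .term, s', x') →
      ESStep (.seq e 𝒮, s, x) l (𝒮, s', x')

/-- Parallel event systems. -/
abbrev PES (L S K : Type) := K → EvtSys L S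

/-- Configurations at the level of parallel event systems. -/
abbrev PConf (L S K : Type) := PES L S K × S × EvtCtx L S K

/-- Labelled transitions of parallel event systems. -/
inductive PESStep {L S K : Type} [DecidableEq K] :
    PConf L S K → Lbl L S K → PConf L S K → Prop where
  | par {ps : PES L S K} {κ : K} {t : Act L S} {s s' : S} {x x' : EvtCtx L S K}
      {es' : EvtSys L S} :
      ESStep (ps κ, s, x) (t, κ) (es', s', x') →
      PESStep (ps, s, x) (t, κ) (Function.update ps κ es', s', x')

/-! ## Computations -/

section Computation

variable {σ S X : Type}

/-- An environment transition between two configurations: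
the specification component is unchanged. -/
def EnvTr (c c' : σ × S × X) : Prop := c.1 = c'.1

/-- Computations: nonempty lists of configurations in which every consecutive pair
is an environment transition or an action transition of the semantics. -/
inductive Comp (step : σ × S × X → σ × S × X → Prop) : List (σ × S × X) → Prop where
  | one (c : σ × S × X) : Comp step [c]
  | env {sp : σ} {s₁ s₂ : S} {x₁ x₂ : X} {cs : List (σ × S × X)} :
      Comp step ((sp, s₁, x₁) :: cs) → Comp step ((sp, s₂, x₂) :: (sp, s₁, x₁) :: cs)
  | act {c c' : σ × S × X} {cs : List (σ × S × X)} :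
      step c c' → Comp step (c' :: cs) → Comp step (c :: c' :: cs)

/-- `Ψ(♯, s, x)`: the computations starting in the configuration `(♯, s, x)`. -/
def cpts (step : σ × S × X → σ × S × X → Prop) (sp : σ) (s : S) (x : X) :
    Set (List (σ × S × X)) :=
  {ϖ | Comp step ϖ ∧ ϖ.head? = some (sp, s, x)}

/-- The assumption `A(pre, R)`. -/
def Assum (pre : Set S) (R : Set (S × S)) : Set (List (σ × S × X)) :=
  {ϖ | (∀ c, ϖ.head? = some c → c.2.1 ∈ pre) ∧
    ∀ i c c', ϖ[i]? = some c → ϖ[i + 1]? = some c' → EnvTr c c' →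
      (c.2.1, c'.2.1) ∈ R}

/-- The commitment `C(G, pst)` (`fin` tells when a specification is terminated). -/
def Commit (step : σ × S × X → σ × S × X → Prop) (fin : σ → Prop)
    (G : Set (S × S)) (pst : Set S) : Set (List (σ × S × X)) :=
  {ϖ | (∀ i c c', ϖ[i]? = some c → ϖ[i + 1]? = some c' → step c c' →
      (c.2.1, c'.2.1) ∈ G) ∧
    ∀ c, ϖ.getLast? = some c → fin c.1 → c.2.1 ∈ pst}

end Computation

/-! ## Validity of rely-guarantee specifications -/

section Validity

variable {L S K : Type}

/-- Program action transitions lifted to configurations with a trivial event context. -/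
def pstepL {S : Type} (c c' : Prog S × S × Unit) : Prop :=
  PStep (c.1, c.2.1) (c'.1, c'.2.1)

/-- Action transitions of events (any label). -/
def estepAny [DecidableEq K] (c c' : EConf L S K) : Prop := ∃ l, EStep c l c'

/-- Action transitions of event systems (any label). -/
def esstepAny [DecidableEq K] (c c' : ESConf L S K) : Prop := ∃ l, ESStep c l c'

/-- Action transitions of parallel event systems (any label). -/
def pesstepAny [DecidableEq K] (c c' : PConf L S K) : Prop := ∃ l, PESStep c l c'

/-- A terminated program. -/
def progFin : Prog S → Prop := fun P => P = .term

/-- A terminated event. -/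
def evtFin : Event L S → Prop := fun e => e = .anony .term

/-- Event systems have no terminated form. -/
def esysFin : EvtSys L S → Prop := fun _ => False

/-- Parallel event systems have no terminated form. -/
def pesFin : PES L S K → Prop := fun _ => False

/-- Validity `⊨ P sat ⟨pre, R, G, pst⟩` for programs. -/
def progValid (P : Prog S) (pre : Set S) (R G : Set (S × S)) (pst : Set S) : Prop :=
  ∀ s : S, cpts pstepL P s () ∩ Assum pre R ⊆ Commit pstepL progFin G pst

/-- Validity `⊨ ℰ sat ⟨pre, R, G, pst⟩` for events. -/
def evtValid [DecidableEq K] (e : Event L S) (pre : Set S) (R G : Set (S × S))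
    (pst : Set S) : Prop :=
  ∀ (s : S) (x : EvtCtx L S K),
    cpts estepAny e s x ∩ Assum pre R ⊆ Commit estepAny evtFin G pst

/-- Validity `⊨ 𝒮 sat ⟨pre, R, G, pst⟩` for event systems. -/
def esysValid [DecidableEq K] (es : EvtSys L S) (pre : Set S) (R G : Set (S × S))
    (pst : Set S) : Prop :=
  ∀ (s : S) (x : EvtCtx L S K),
    cpts esstepAny es s x ∩ Assum pre R ⊆ Commit esstepAny esysFin G pst

/-- Validity `⊨ 𝒫𝒮 sat ⟨pre, R, G, pst⟩` for parallel event systems. -/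
def pesValid [DecidableEq K] (ps : PES L S K) (pre : Set S) (R G : Set (S × S))
    (pst : Set S) : Prop :=
  ∀ (s : S) (x : EvtCtx L S K),
    cpts pesstepAny ps s x ∩ Assum pre R ⊆ Commit pesstepAny pesFin G pst

end Validity

/-! ## The rely-guarantee proof system -/

/-- Specifications: programs, events, event systems, or parallel event systems. -/
inductive Spec (L S K : Type) : Type where
  | prog : Prog S → Spec L S K
  | evt : Event L S → Spec L S K
  | esys : EvtSys L S → Spec L S K
  | pes : PES L S K → Spec L S K

/-- A specification that is not a parallel event system. -/
def Spec.noPar {L S K : Type} : Spec L S K → Prop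
  | .pes _ => False
  | _ => True

/-- Uniform validity `⊨ ♯ sat ⟨pre, R, G, pst⟩`. -/
def RGValid {L S K : Type} [DecidableEq K] :
    Spec L S K → Set S → Set (S × S) → Set (S × S) → Set S → Prop
  | .prog P, pre, R, G, pst => progValid P pre R G pst
  | .evt e, pre, R, G, pst => evtValid (K := K) e pre R G pst
  | .esys es, pre, R, G, pst => esysValid (K := K) es pre R G pst
  | .pes ps, pre, R, G, pst => pesValid ps pre R G pst

/-- `stable f g`. -/
def stable {α : Type} (f : Set α) (g : Set (α × α)) : Prop :=
  ∀ x y, x ∈ f → (x, y) ∈ g → y ∈ f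

/-- The identity relation on a state space. -/
def idRel {S : Type} : Set (S × S) := {p | p.1 = p.2}

/-- The rely-guarantee proof system `⊢ ♯ sat ⟨pre, R, G, pst⟩`. -/
inductive RGDeriv {L S K : Type} [DecidableEq K] :
    Spec L S K → Set S → Set (S × S) → Set (S × S) → Set S → Prop where
  | basic {f : S → S} {pre pst : Set S} {R G : Set (S × S)} :
      pre ⊆ {s | f s ∈ pst} →
      {p : S × S | p.1 ∈ pre ∧ p.2 = f p.1} ⊆ G →
      stable pre R → stable pst R →
      RGDeriv (.prog (.basic f)) pre R G pst
  | seq {P Q : Prog S} {pre m pst : Set S} {R G : Set (S × S)} :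
      RGDeriv (.prog P) pre R G m → RGDeriv (.prog Q) m R G pst →
      RGDeriv (.prog (.seq P Q)) pre R G pst
  | cond {b : Set S} {P₁ P₂ : Prog S} {pre pst : Set S} {R G : Set (S × S)} :
      RGDeriv (.prog P₁) (pre ∩ b) R G pst →
      RGDeriv (.prog P₂) (pre ∩ bᶜ) R G pst →
      stable pre R → idRel ⊆ G →
      RGDeriv (.prog (.cond b P₁ P₂)) pre R G pst
  | whileR {b : Set S} {P : Prog S} {pre pst : Set S} {R G : Set (S × S)} :
      RGDeriv (.prog P) (pre ∩ b) R G pre →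
      pre ∩ bᶜ ⊆ pst →
      stable pre R → stable pst R → idRel ⊆ G →
      RGDeriv (.prog (.while' b P)) pre R G pst
  | awaitR {b : Set S} {P : Prog S} {pre pst : Set S} {R G : Set (S × S)} :
      (∀ V : S, RGDeriv (.prog P) (pre ∩ b ∩ {V}) idRel Set.univ
        ({s | (V, s) ∈ G} ∩ pst)) →
      stable pre R → stable pst R →
      RGDeriv (.prog (.await b P)) pre R G pst
  | nondt {r : Set (S × S)} {pre pst : Set S} {R G : Set (S × S)} :
      pre ⊆ {s | (∀ s', (s, s') ∈ r → s' ∈ pst) ∧ ∃ s', (s, s') ∈ r} →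
      {p : S × S | p.1 ∈ pre ∧ p ∈ r} ⊆ G →
      stable pre R → stable pst R →
      RGDeriv (.prog (.nondt r)) pre R G pst
  | conseq {sp : Spec L S K} {pre pre' pst pst' : Set S} {R R' G G' : Set (S × S)} :
      sp.noPar →
      pre ⊆ pre' → R ⊆ R' → G' ⊆ G → pst' ⊆ pst →
      RGDeriv sp pre' R' G' pst' →
      RGDeriv sp pre R G pst
  | unPre {P : Prog S} {pre pre' pst : Set S} {R G : Set (S × S)} :
      RGDeriv (.prog P) pre R G pst → RGDeriv (.prog P) pre' R G pst →
      RGDeriv (.prog P) (pre ∪ pre') R G pst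
  | intPost {P : Prog S} {pre pst pst' : Set S} {R G : Set (S × S)} :
      RGDeriv (.prog P) pre R G pst → RGDeriv (.prog P) pre R G pst' →
      RGDeriv (.prog P) pre R G (pst ∩ pst')
  | univPre {P : Prog S} {pre pst : Set S} {R G : Set (S × S)} :
      (∀ v ∈ pre, RGDeriv (.prog P) {v} R G pst) →
      RGDeriv (.prog P) pre R G pst
  | emptyPre {P : Prog S} {pst : Set S} {R G : Set (S × S)} :
      RGDeriv (.prog P) ∅ R G pst
  | inner {P : Prog S} {pre pst : Set S} {R G : Set (S × S)} :
      RGDeriv (.prog P) pre R G pst →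
      RGDeriv (.evt (.anony P)) pre R G pst
  | basicEvt {α : EvtSpec L S} {pre pst : Set S} {R G : Set (S × S)} :
      RGDeriv (.prog α.body) (pre ∩ α.guard) R G pst →
      stable pre R → idRel ⊆ G →
      RGDeriv (.evt (.basic α)) pre R G pst
  | evtSeq {e : Event L S} {𝒮 : EvtSys L S} {pre m pst : Set S} {R G : Set (S × S)} :
      RGDeriv (.evt e) pre R G m → RGDeriv (.esys 𝒮) m R G pst →
      RGDeriv (.esys (.seq e 𝒮)) pre R G pst
  | evtSet {n : ℕ} {es : Fin (n + 1) → Event L S} {pre pst : Set S}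
      {R G : Set (S × S)} {pres psts : Fin (n + 1) → Set S}
      {Rs Gs : Fin (n + 1) → Set (S × S)} :
      (∀ i, RGDeriv (.evt (es i)) (pres i) (Rs i) (Gs i) (psts i)) →
      (∀ i j, psts i ⊆ pres j) →
      (∀ i, pre ⊆ pres i) → (∀ i, psts i ⊆ pst) →
      (∀ i, R ⊆ Rs i) → (∀ i, Gs i ⊆ G) →
      stable pre R → idRel ⊆ G →
      RGDeriv (.esys (.set n es)) pre R G pst
  | par {ps : PES L S K} {pre pst : Set S} {R G : Set (S × S)}
      {pres psts : K → Set S} {Rs Gs : K → Set (S × S)} :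
      (∀ κ, RGDeriv (.esys (ps κ)) (pres κ) (Rs κ) (Gs κ) (psts κ)) →
      (∀ κ, pre ⊆ pres κ) → (∀ κ, psts κ ⊆ pst) →
      (∀ κ, Gs κ ⊆ G) → (∀ κ, R ⊆ Rs κ) →
      (∀ κ κ', κ ≠ κ' → Gs κ ⊆ Rs κ') →
      RGDeriv (.pes ps) pre R G pst


/-! ## Serialization and compositionality machinery -/

/-- The set of events occurring syntactically in an event system. -/
def EvtSys.evts {L S : Type} : EvtSys L S → Set (Event L S)
  | .set _ es => Set.range es
  | .seq e 𝒮 => insert e 𝒮.evts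

/-- Similarity (simulation) of two computations, possibly over different
specification types: same length, and at each position the states and event
contexts coincide and the steps are the same labelled action transitions
(resp. environment transitions). -/
def Similar {σ₁ σ₂ S X Λ : Type}
    (st₁ : σ₁ × S × X → Λ → σ₁ × S × X → Prop)
    (st₂ : σ₂ × S × X → Λ → σ₂ × S × X → Prop)
    (w₁ : List (σ₁ × S × X)) (w₂ : List (σ₂ × S × X)) : Prop :=
  w₁.length = w₂.length ∧
  ∀ i c₁ c₁' c₂ c₂', w₁[i]? = some c₁ → w₁[i + 1]? = some c₁' →
    w₂[i]? = some c₂ → w₂[i + 1]? = some c₂' →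
    c₁.2.1 = c₂.2.1 ∧ c₁.2.2 = c₂.2.2 ∧
    (∀ δ, st₁ c₁ δ c₁' ↔ st₂ c₂ δ c₂') ∧
    (EnvTr c₁ c₁' ↔ EnvTr c₂ c₂')

/-- The computations of an event (from an arbitrary initial state and
event context). -/
def cptsOfEvt {L S K : Type} [DecidableEq K] (e : Event L S) :
    Set (List (EConf L S K)) :=
  {w | Comp estepAny w ∧ ∃ s x, w.head? = some (e, s, x)}

/-- A computation `w` of a parallel event system and a family `cf` of
computations of event systems conjoin, `w ∝ cf` (Definition 2). -/
def Conjoin {L S K : Type} [DecidableEq K] (w : List (PConf L S K))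
    (cf : K → List (ESConf L S K)) : Prop :=
  (∀ κ, (cf κ).length = w.length) ∧
  (∀ (κ : K) (j : ℕ) c c', w[j]? = some c → (cf κ)[j]? = some c' →
    c.2.1 = c'.2.1 ∧ c.2.2 = c'.2.2 ∧ c.1 κ = c'.1) ∧
  (∀ (j : ℕ) c c', w[j]? = some c → w[j + 1]? = some c' →
    (EnvTr c c' ∧
      ∀ κ d d', (cf κ)[j]? = some d → (cf κ)[j + 1]? = some d' → EnvTr d d') ∨
    (∃ (t : Act L S) (κ₁ : K), PESStep c (t, κ₁) c' ∧
      (∀ d d', (cf κ₁)[j]? = some d → (cf κ₁)[j + 1]? = some d' →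
        ESStep d (t, κ₁) d') ∧
      (∀ κ, κ ≠ κ₁ → ∀ d d', (cf κ)[j]? = some d → (cf κ)[j + 1]? = some d' →
        EnvTr d d')))


section InnerAux

variable {L S K : Type} [DecidableEq K]

/-- Underlying program of an event (garbage for basic events). -/
def toProg : Event L S → Prog S
  | .anony Q => Q
  | .basic _ => .term

/-- Projection of an event configuration to a program configuration. -/
def projE (c : EConf L S K) : Prog S × S × Unit := (toProg c.1, c.2.1, ())

/-- A program step always changes the program. -/
lemma pstep_ne : ∀ (P : Prog S) {s : S} {P' : Prog S} {s' : S},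
    PStep (P, s) (P', s') → P' ≠ P := by
  intro P
  induction P with
  | term => intro s P' s' h; cases h
  | basic f => intro s P' s' h; cases h; simp
  | seq P₁ P₂ ih₁ ih₂ =>
    intro s P' s' h
    cases h with
    | seq1 _ h1 =>
      intro he
      have := congrArg sizeOf he
      simp only [Prog.seq.sizeOf_spec] at this
      omega
    | seq2 _ h1 hne =>
      intro he
      have h2 := ih₁ h1
      injection he with a b
      exact h2 a
  | cond b P₁ P₂ ih₁ ih₂ =>
    intro s P' s' h
    cases h with
    | condT _ _ _ =>
      intro he; have := congrArg sizeOf he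
      simp only [Prog.cond.sizeOf_spec] at this; omega
    | condF _ _ _ =>
      intro he; have := congrArg sizeOf he
      simp only [Prog.cond.sizeOf_spec] at this; omega
  | while' b P ih =>
    intro s P' s' h
    cases h with
    | whileT _ _ =>
      intro he; have := congrArg sizeOf he
      simp only [Prog.seq.sizeOf_spec, Prog.while'.sizeOf_spec] at this; omega
    | whileF _ _ => simp
  | await b P ih => intro s P' s' h; cases h; simp
  | nondt r => intro s P' s' h; cases h; simp

/-- Inversion: a step of an anonymous event is a program step. -/
lemma estep_anony {Q : Prog S} {s : S} {x : EvtCtx L S K} {c' : EConf L S K}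
    (h : estepAny (Event.anony Q, s, x) c') :
    ∃ Q' s', c' = (Event.anony Q', s', x) ∧ PStep (Q, s) (Q', s') := by
  obtain ⟨l, h⟩ := h
  cases h with
  | anony _ _ hp => exact ⟨_, _, rfl, hp⟩

/-- In a computation, each consecutive pair is an env or an action transition. -/
lemma comp_pairs {σ X : Type} {step : σ × S × X → σ × S × X → Prop}
    {w : List (σ × S × X)} (h : Comp step w) :
    ∀ (i : ℕ) c c', w[i]? = some c → w[i + 1]? = some c' →
      EnvTr c c' ∨ step c c' := by
  induction h with
  | one c => intro i c c' h1 h2; cases i <;> simp_all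
  | env h ih =>
    intro i c c' h1 h2
    cases i with
    | zero =>
      simp only [List.getElem?_cons_zero, List.getElem?_cons_succ,
        Option.some.injEq] at h1 h2
      subst h1; subst h2; left; rfl
    | succ n =>
      simp only [List.getElem?_cons_succ] at h1
      exact ih n c c' h1 (by simpa using h2)
  | act hs _ ih =>
    intro i c c' h1 h2
    cases i with
    | zero =>
      simp only [List.getElem?_cons_zero, List.getElem?_cons_succ,
        Option.some.injEq] at h1 h2
      subst h1; subst h2; right; exact hs
    | succ n =>
      simp only [List.getElem?_cons_succ] at h1
      exact ih n c c' h1 (by simpa using h2)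

/-- A computation of an anonymous event stays anonymous, and projects to a
program computation. -/
lemma anony_comp {w : List (EConf L S K)} (h : Comp estepAny w) :
    ∀ Q s x, w.head? = some (Event.anony Q, s, x) →
      (∀ c ∈ w, ∃ Q', c.1 = Event.anony Q') ∧ Comp pstepL (w.map projE) := by
  induction h with
  | one c =>
    intro Q s x hh
    simp only [List.head?_cons, Option.some.injEq] at hh
    subst hh
    exact ⟨by simp, Comp.one _⟩
  | @env sp s₁ s₂ x₁ x₂ cs h ih =>
    intro Q s x hh
    simp only [List.head?_cons, Option.some.injEq, Prod.mk.injEq] at hh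
    obtain ⟨hsp, hs, hx⟩ := hh
    subst hsp
    obtain ⟨hall, hc⟩ := ih Q s₁ x₁ (by simp)
    refine ⟨?_, ?_⟩
    · intro c hcm
      rcases List.mem_cons.mp hcm with h1 | h1
      · subst h1; exact ⟨Q, rfl⟩
      · exact hall c h1
    · simpa [projE, toProg] using Comp.env (S := S) (x₁ := ()) (x₂ := ()) hc
  | @act c c' cs hs h ih =>
    intro Q s x hh
    simp only [List.head?_cons, Option.some.injEq] at hh
    subst hh
    obtain ⟨Q', s', hc', hp⟩ := estep_anony hs
    subst hc'
    obtain ⟨hall, hc⟩ := ih Q' s' x (by simp)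
    refine ⟨?_, ?_⟩
    · intro c hcm
      rcases List.mem_cons.mp hcm with h1 | h1
      · subst h1; exact ⟨Q, rfl⟩
      · exact hall c h1
    · exact Comp.act (show pstepL (projE _) (projE _) from hp) hc

end InnerAux

/-- **Semantic soundness of the Inner rule.** -/
theorem inner_rule_sound {L S K : Type} [DecidableEq K]
    (P : Prog S) (pre pst : Set S) (R G : Set (S × S))
    (h : progValid P pre R G pst) :
    evtValid (L := L) (K := K) (Event.anony P) pre R G pst := by
  intro s x ϖ hϖ
  obtain ⟨⟨hcomp, hhead⟩, hpre, henv⟩ := hϖ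
  obtain ⟨hall, hcomp'⟩ := anony_comp hcomp P s x hhead
  -- the projected computation
  set w' : List (Prog S × S × Unit) := ϖ.map projE with hw'
  have hidx : ∀ (i : ℕ) (c : EConf L S K), ϖ[i]? = some c → w'[i]? = some (projE c) := by
    intro i c hc
    simp [hw', List.getElem?_map, hc]
  have hhead' : w'.head? = some (P, s, ()) := by
    cases ϖ with
    | nil => simp at hhead
    | cons a t =>
      simp only [List.head?_cons, Option.some.injEq] at hhead
      subst hhead
      simp [hw', projE, toProg]
  have hin : w' ∈ cpts pstepL P s () ∩ Assum pre R := by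
    refine ⟨⟨hcomp', hhead'⟩, ?_, ?_⟩
    · intro c hc
      rw [hhead'] at hc
      cases hc
      exact hpre _ hhead
    · intro i c c' hc hc' hE
      -- pull back to ϖ
      have pull : ∀ (j : ℕ) (cc : Prog S × S × Unit), w'[j]? = some cc →
          ∃ d, ϖ[j]? = some d ∧ projE d = cc := by
        intro j cc hcc
        rw [hw', List.getElem?_map] at hcc
        cases h' : ϖ[j]? with
        | none => rw [h'] at hcc; simp at hcc
        | some d => rw [h'] at hcc; exact ⟨d, rfl, by simpa using hcc⟩
      obtain ⟨d, hd, hdc⟩ := pull i c hc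
      obtain ⟨d', hd', hdc'⟩ := pull (i + 1) c' hc'
      rcases comp_pairs hcomp i d d' hd hd' with he | ha
      · have := henv i d d' hd hd' he
        rw [← hdc, ← hdc']
        exact this
      · -- action transition: program changes, contradicting EnvTr
        obtain ⟨Q, hQ⟩ := hall d (List.mem_of_getElem? hd)
        obtain ⟨d1, ⟨s1, x1⟩⟩ := d
        simp only at hQ
        subst hQ
        obtain ⟨Q', s'', hc'', hp⟩ := estep_anony ha
        subst hc''
        exfalso
        have : c.1 = Q := by rw [← hdc]; rfl
        have h2 : c'.1 = Q' := by rw [← hdc']; rfl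
        have hE' : c.1 = c'.1 := hE
        exact pstep_ne Q hp (by rw [← h2, ← hE', this])
  obtain ⟨hG, hlast⟩ := h s hin
  refine ⟨?_, ?_⟩
  · intro i c c' hc hc' hstep
    obtain ⟨Q, hQ⟩ := hall c (List.mem_of_getElem? hc)
    obtain ⟨c1, ⟨s1, x1⟩⟩ := c
    simp only at hQ
    subst hQ
    obtain ⟨Q', s'', hc'', hp⟩ := estep_anony hstep
    subst hc''
    have := hG i (projE (Event.anony Q, s1, x1)) (projE (Event.anony Q', s'', x1))
      (hidx i _ hc) (hidx (i + 1) _ hc') hp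
    exact this
  · intro c hc hfin
    have hlast' : w'.getLast? = some (projE c) := by
      simp [hw', List.getLast?_map, hc]
    have : (projE c).2.1 ∈ pst := by
      apply hlast _ hlast'
      obtain ⟨c1, cs⟩ := c
      have : c1 = Event.anony Prog.term := hfin
      subst this
      rfl
    exact this

end PiCore
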